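/- arXiv:2307.10465 — 2 statements merged into one kernel-verified Lean document; each statement's English description precedes it below -/
import Mathlib

section
/- Let B₁ and B₂ be atomic Boolean algebras, each with infinitely many atoms, and let F : B₁ → B₂ be a Boolean algebra embedding such that F maps atoms to atoms, F restricted to atoms is a bijection onto the atoms of B₂, and for each natural number n, F preserves the property of being a join of at most n atoms. Then F is an elementary embedding (in the first-order language of Boolean algebras). -/
open FirstOrder

/-- Function symbols of the first-order language of Boolean algebras: `0`, `1`, `¬`, `∧`, `∨`. -/
inductive BoolFunc : ℕ → Type
  | bot : BoolFunc 0
  | top : BoolFunc 0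
  | compl : BoolFunc 1
  | inf : BoolFunc 2
  | sup : BoolFunc 2

/-- The first-order language `{∧, ∨, ¬, 0, 1}` of Boolean algebras. -/
def boolLang : Language := ⟨BoolFunc, fun _ => Empty⟩

/-- Any Boolean algebra is a structure for the language of Boolean algebras. -/
instance boolLangStructure (B : Type*) [BooleanAlgebra B] : boolLang.Structure B where
  funMap {n} f v :=
    match f with
    | .bot => ⊥
    | .top => ⊤
    | .compl => (v 0)ᶜ
    | .inf => v 0 ⊓ v 1
    | .sup => v 0 ⊔ v 1
  RelMap {n} r _ := nomatch r

section Aux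

variable {A : Type*} {B : Type*} [BooleanAlgebra A] [BooleanAlgebra B]

/-- number of atoms below `x` -/
noncomputable def nsize (x : A) : ℕ∞ := {a : A | IsAtom a ∧ a ≤ x}.encard

lemma atom_le_or_le_compl {a : A} (ha : IsAtom a) (x : A) : a ≤ x ∨ a ≤ xᶜ := by
  rcases eq_or_ne (a ⊓ x) ⊥ with h | h
  · right
    have h2 : a = (a ⊓ x) ⊔ (a ⊓ xᶜ) := by
      rw [← inf_sup_left, sup_compl_eq_top, inf_top_eq]
    rw [h, bot_sup_eq] at h2
    exact h2.le.trans inf_le_right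
  · left
    rcases (inf_le_left : a ⊓ x ≤ a).lt_or_eq with hlt | he
    · exact absurd (ha.2 _ hlt) h
    · exact inf_eq_left.mp he

lemma le_compl_of_inf_eq_bot {x y : A} (h : x ⊓ y = ⊥) : x ≤ yᶜ := by
  have h2 : x = (x ⊓ y) ⊔ (x ⊓ yᶜ) := by
    rw [← inf_sup_left, sup_compl_eq_top, inf_top_eq]
  rw [h, bot_sup_eq] at h2
  exact h2.le.trans inf_le_right

lemma nsize_eq_zero [IsAtomic A] {x : A} : nsize x = 0 ↔ x = ⊥ := by
  constructor
  · intro h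
    by_contra hx
    obtain ⟨a, ha, hax⟩ := (IsAtomic.eq_bot_or_exists_atom_le x).resolve_left hx
    rw [nsize, Set.encard_eq_zero] at h
    have : a ∈ {a : A | IsAtom a ∧ a ≤ x} := ⟨ha, hax⟩
    rw [h] at this
    exact this
  · rintro rfl
    rw [nsize, Set.encard_eq_zero]
    ext a
    simp only [Set.mem_setOf_eq, Set.mem_empty_iff_false, iff_false, not_and, le_bot_iff]
    exact fun ha h => ha.1 h

lemma nsize_split {y c : A} (h : y ≤ c) : nsize c = nsize y + nsize (c ⊓ yᶜ) := by
  rw [nsize, nsize, nsize, ← Set.encard_union_eq]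
  · congr 1
    ext a
    constructor
    · rintro ⟨ha, hac⟩
      rcases atom_le_or_le_compl ha y with h1 | h1
      · exact Or.inl ⟨ha, h1⟩
      · exact Or.inr ⟨ha, le_inf hac h1⟩
    · rintro (⟨ha, h1⟩ | ⟨ha, h1⟩)
      · exact ⟨ha, h1.trans h⟩
      · exact ⟨ha, h1.trans inf_le_left⟩
  · rw [Set.disjoint_left]
    rintro a ⟨ha, h1⟩ ⟨_, h2⟩
    have : a ≤ y ⊓ yᶜ := le_inf h1 (h2.trans inf_le_right)
    rw [inf_compl_eq_bot, le_bot_iff] at this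
    exact ha.1 this

lemma atoms_finsetSup {t : Finset A} (ht : ∀ a ∈ t, IsAtom a) :
    {a : A | IsAtom a ∧ a ≤ t.sup id} = ↑t := by
  ext a
  simp only [Set.mem_setOf_eq, Finset.coe_sort_coe, Finset.mem_coe]
  constructor
  · rintro ⟨ha, hle⟩
    by_contra hat
    have h1 : a ⊓ t.sup id = a := inf_eq_left.mpr hle
    rw [Finset.sup_inf_distrib_left] at h1
    have h2 : ∀ b ∈ t, a ⊓ id b = ⊥ := by
      intro b hb
      rcases atom_le_or_le_compl ha b with h | h
      · rcases ((ht b hb).le_iff.mp h) with h' | h'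
        · exact absurd h' ha.1
        · exact absurd (h' ▸ hb) hat
      · have : a ⊓ b ≤ bᶜ ⊓ b := inf_le_inf_right b h
        rwa [compl_inf_eq_bot, le_bot_iff] at this
    have h3 : t.sup (fun b => a ⊓ id b) = ⊥ :=
      le_bot_iff.mp (Finset.sup_le fun b hb => (h2 b hb).le)
    exact ha.1 (h1 ▸ h3 ▸ rfl)
  · intro hat
    exact ⟨ht a hat, Finset.le_sup (f := id) hat⟩

lemma nsize_finsetSup {t : Finset A} (ht : ∀ a ∈ t, IsAtom a) :
    nsize (t.sup id) = t.card := by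
  rw [nsize, atoms_finsetSup ht, Set.encard_coe_eq_coe_finsetCard]

lemma exists_le_nsize {c : A} (k : ℕ) (hk : (k : ℕ∞) ≤ nsize c) :
    ∃ y ≤ c, nsize y = k := by
  obtain ⟨S, hS, hcard⟩ := Set.exists_subset_encard_eq hk
  have hfin : S.Finite := Set.finite_of_encard_eq_coe hcard
  have hts : ↑hfin.toFinset = S := hfin.coe_toFinset
  have hmem : ∀ a ∈ hfin.toFinset, IsAtom a ∧ a ≤ c := by
    intro a hat
    exact hS (by rw [← hts]; exact_mod_cast hat)
  refine ⟨hfin.toFinset.sup id, Finset.sup_le (fun a hat => (hmem a hat).2), ?_⟩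
  rw [nsize_finsetSup (fun a hat => (hmem a hat).1)]
  rw [← Set.encard_coe_eq_coe_finsetCard, hts, hcard]

lemma inf_inf_compl' (c x : A) : c ⊓ (c ⊓ x)ᶜ = c ⊓ xᶜ := by
  rw [compl_inf, inf_sup_left, inf_compl_eq_bot, bot_sup_eq]

/-- Splitting lemma: key combinatorial step. -/
lemma split_lemma (N : ℕ) (c₁ : A) (c₂ : B) (x : A)
    (h : min (nsize c₁) ((N : ℕ∞) + N) = min (nsize c₂) ((N : ℕ∞) + N)) :
    ∃ y, y ≤ c₂ ∧ min (nsize (c₁ ⊓ x)) (N : ℕ∞) = min (nsize y) (N : ℕ∞)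
      ∧ min (nsize (c₁ ⊓ xᶜ)) (N : ℕ∞) = min (nsize (c₂ ⊓ yᶜ)) (N : ℕ∞) := by
  set k₁ := nsize (c₁ ⊓ x) with hk₁def
  set k₂ := nsize (c₁ ⊓ xᶜ) with hk₂def
  have hsum : nsize c₁ = k₁ + k₂ := by
    have h0 := nsize_split (y := c₁ ⊓ x) (c := c₁) inf_le_left
    rwa [inf_inf_compl'] at h0
  rw [hsum] at h
  clear_value k₁ k₂
  have hge : min (k₁ + k₂) ((N : ℕ∞) + N) ≤ nsize c₂ := by
    rw [h]; exact min_le_left _ _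
  by_cases hk1 : k₁ < (N : ℕ∞)
  · lift k₁ to ℕ using (hk1.trans (WithTop.coe_lt_top N)).ne
    by_cases hk2 : k₂ < (N : ℕ∞)
    · -- Case A: both small, sizes transfer exactly
      lift k₂ to ℕ using (hk2.trans (WithTop.coe_lt_top N)).ne
      have hlt : (k₁ : ℕ∞) + k₂ < (N : ℕ∞) + N := by
        rw [← Nat.cast_add, ← Nat.cast_add, Nat.cast_lt]
        rw [Nat.cast_lt] at hk1 hk2
        omega
      rw [min_eq_left hlt.le] at h
      have hc2eq : nsize c₂ = (k₁ : ℕ∞) + k₂ := by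
        rcases le_total (nsize c₂) ((N : ℕ∞) + N) with hh | hh
        · rw [min_eq_left hh] at h; exact h.symm
        · rw [min_eq_right hh] at h; exact absurd h hlt.ne
      obtain ⟨y, hyc, hy⟩ := exists_le_nsize (c := c₂) k₁ (by rw [hc2eq]; exact le_self_add)
      refine ⟨y, hyc, by rw [hy], ?_⟩
      have h5 := nsize_split hyc
      rw [hc2eq, hy] at h5
      have h6 : nsize (c₂ ⊓ yᶜ) = (k₂ : ℕ∞) :=
        (WithTop.add_left_cancel (WithTop.coe_ne_top) h5.symm)
      rw [h6]
    · -- Case B: k₁ small, k₂ large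
      push_neg at hk2
      have h1 : (k₁ : ℕ∞) + N ≤ nsize c₂ :=
        le_trans (le_min (add_le_add le_rfl hk2) (add_le_add hk1.le le_rfl)) hge
      obtain ⟨y, hyc, hy⟩ := exists_le_nsize (c := c₂) k₁ (le_trans le_self_add h1)
      refine ⟨y, hyc, by rw [hy], ?_⟩
      have h5 := nsize_split hyc
      rw [hy] at h5
      have h6 : (N : ℕ∞) ≤ nsize (c₂ ⊓ yᶜ) := by
        rw [h5] at h1
        exact (WithTop.add_le_add_iff_left (WithTop.coe_ne_top)).mp h1
      rw [min_eq_right hk2, min_eq_right h6]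
  · push_neg at hk1
    by_cases hk2 : k₂ < (N : ℕ∞)
    · -- Case C: k₁ large, k₂ small
      lift k₂ to ℕ using (hk2.trans (WithTop.coe_lt_top N)).ne
      have h1 : (k₂ : ℕ∞) + N ≤ nsize c₂ := by
        refine le_trans (le_min ?_ (add_le_add hk2.le le_rfl)) hge
        rw [add_comm k₁ k₂]
        exact add_le_add le_rfl hk1
      obtain ⟨z, hzc, hz⟩ := exists_le_nsize (c := c₂) k₂ (le_trans le_self_add h1)
      have hyy : c₂ ⊓ (c₂ ⊓ zᶜ)ᶜ = z := by
        rw [compl_inf, compl_compl, inf_sup_left, inf_compl_eq_bot, bot_sup_eq,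
          inf_eq_right.mpr hzc]
      refine ⟨c₂ ⊓ zᶜ, inf_le_left, ?_, by rw [hyy, hz]⟩
      have h5 := nsize_split hzc
      rw [hz] at h5
      have h6 : (N : ℕ∞) ≤ nsize (c₂ ⊓ zᶜ) := by
        rw [h5] at h1
        exact (WithTop.add_le_add_iff_left (WithTop.coe_ne_top)).mp h1
      rw [min_eq_right hk1, min_eq_right h6]
    · -- Case D: both large
      push_neg at hk2
      have h1 : (N : ℕ∞) + N ≤ nsize c₂ :=
        le_trans (le_of_eq (min_eq_right (add_le_add hk1 hk2)).symm) hge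
      obtain ⟨y, hyc, hy⟩ := exists_le_nsize (c := c₂) N (le_trans le_self_add h1)
      refine ⟨y, hyc, ?_, ?_⟩
      · rw [hy, min_eq_right hk1, min_self]
      · have h5 := nsize_split hyc
        rw [hy] at h5
        have h6 : (N : ℕ∞) ≤ nsize (c₂ ⊓ yᶜ) := by
          rw [h5] at h1
          exact (WithTop.add_le_add_iff_left (WithTop.coe_ne_top)).mp h1
        rw [min_eq_right hk2, min_eq_right h6]

section Cells

variable {γ : Type*} [Fintype γ]

/-- The cell of a pattern `s` with respect to a valuation `V`. -/
def cell (V : γ → A) (s : γ → Bool) : A :=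
  Finset.univ.inf fun i => bif s i then V i else (V i)ᶜ

lemma cell_le (V : γ → A) (s : γ → Bool) (i : γ) :
    cell V s ≤ bif s i then V i else (V i)ᶜ :=
  Finset.inf_le (Finset.mem_univ i)

lemma exists_cell_ge {a : A} (ha : IsAtom a) (V : γ → A) : ∃ s, a ≤ cell V s := by
  classical
  refine ⟨fun i => decide (a ≤ V i), Finset.le_inf fun i _ => ?_⟩
  show a ≤ bif decide (a ≤ V i) then V i else (V i)ᶜ
  by_cases h : a ≤ V i
  · rw [decide_eq_true h]; exact h
  · rw [decide_eq_false h]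
    exact (atom_le_or_le_compl ha (V i)).resolve_left h

lemma cell_disjoint {V : γ → A} {s t : γ → Bool} (hst : s ≠ t) :
    cell V s ⊓ cell V t = ⊥ := by
  obtain ⟨i, hi⟩ := Function.ne_iff.mp hst
  have h1 := cell_le V s i
  have h2 := cell_le V t i
  rw [le_bot_iff.symm]
  cases hs : s i
  · rw [hs] at h1
    cases ht : t i
    · rw [hs, ht] at hi; exact absurd rfl hi
    · rw [ht] at h2
      calc cell V s ⊓ cell V t ≤ (V i)ᶜ ⊓ V i := inf_le_inf h1 h2
        _ = ⊥ := compl_inf_eq_bot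
  · rw [hs] at h1
    cases ht : t i
    · rw [ht] at h2
      calc cell V s ⊓ cell V t ≤ V i ⊓ (V i)ᶜ := inf_le_inf h1 h2
        _ = ⊥ := inf_compl_eq_bot
    · rw [hs, ht] at hi; exact absurd rfl hi

@[simp] lemma funMap_bot' (v : Fin 0 → A) :
    Language.Structure.funMap (L := boolLang) BoolFunc.bot v = (⊥ : A) := rfl
@[simp] lemma funMap_top' (v : Fin 0 → A) :
    Language.Structure.funMap (L := boolLang) BoolFunc.top v = (⊤ : A) := rfl
@[simp] lemma funMap_compl' (v : Fin 1 → A) :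
    Language.Structure.funMap (L := boolLang) BoolFunc.compl v = (v 0)ᶜ := rfl
@[simp] lemma funMap_inf' (v : Fin 2 → A) :
    Language.Structure.funMap (L := boolLang) BoolFunc.inf v = v 0 ⊓ v 1 := rfl
@[simp] lemma funMap_sup' (v : Fin 2 → A) :
    Language.Structure.funMap (L := boolLang) BoolFunc.sup v = v 0 ⊔ v 1 := rfl

lemma cell_le_term (t : boolLang.Term γ) (V : γ → A) (s : γ → Bool) :
    (Language.Term.realize s t = true → cell V s ≤ Language.Term.realize V t) ∧
    (Language.Term.realize s t = false → cell V s ≤ (Language.Term.realize V t)ᶜ) := by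
  induction t with
  | var i =>
    have h := cell_le V s i
    simp only [Language.Term.realize_var]
    constructor
    · intro hs; rwa [hs] at h
    · intro hs; rwa [hs] at h
  | func f ts ih =>
    cases f
    · erw [Language.Term.realize_func, Language.Term.realize_func, funMap_bot', funMap_bot']
      constructor
      · intro h; exact absurd h (by simp [Bot.bot])
      · intro _; rw [compl_bot]; exact le_top
    · erw [Language.Term.realize_func, Language.Term.realize_func, funMap_top', funMap_top']
      constructor
      · intro _; exact le_top
      · intro h; exact absurd h (by simp [Top.top])
    · erw [Language.Term.realize_func, Language.Term.realize_func, funMap_compl', funMap_compl']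
      have h0 := ih 0
      constructor
      · intro h
        have : Language.Term.realize s (ts 0) = false := by
          have : (Language.Term.realize s (ts 0))ᶜ = true := h
          simpa [compl] using this
        exact h0.2 this
      · intro h
        have : Language.Term.realize s (ts 0) = true := by
          have : (Language.Term.realize s (ts 0))ᶜ = false := h
          simpa [compl] using this
        rw [compl_compl]
        exact h0.1 this
    · erw [Language.Term.realize_func, Language.Term.realize_func, funMap_inf', funMap_inf']
      have h0 := ih 0
      have h1 := ih 1
      constructor
      · intro h
        have h' : (Language.Term.realize s (ts 0) && Language.Term.realize s (ts 1)) = true := h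
        rw [Bool.and_eq_true] at h'
        exact le_inf (h0.1 h'.1) (h1.1 h'.2)
      · intro h
        have h' : (Language.Term.realize s (ts 0) && Language.Term.realize s (ts 1)) = false := h
        rw [compl_inf]
        rcases Bool.and_eq_false_iff.mp h' with h'' | h''
        · exact (h0.2 h'').trans le_sup_left
        · exact (h1.2 h'').trans le_sup_right
    · erw [Language.Term.realize_func, Language.Term.realize_func, funMap_sup', funMap_sup']
      have h0 := ih 0
      have h1 := ih 1
      constructor
      · intro h
        have h' : (Language.Term.realize s (ts 0) || Language.Term.realize s (ts 1)) = true := h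
        rcases Bool.or_eq_true_iff.mp h' with h'' | h''
        · exact (h0.1 h'').trans le_sup_left
        · exact (h1.1 h'').trans le_sup_right
      · intro h
        have h' : (Language.Term.realize s (ts 0) || Language.Term.realize s (ts 1)) = false := h
        rw [Bool.or_eq_false_iff] at h'
        rw [compl_sup]
        exact le_inf (h0.2 h'.1) (h1.2 h'.2)

lemma atom_term_true {a : A} (ha : IsAtom a) {V : γ → A} {s : γ → Bool}
    (hs : a ≤ cell V s) {t : boolLang.Term γ}
    (h : a ≤ Language.Term.realize V t) : Language.Term.realize s t = true := by
  cases hb : Language.Term.realize s t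
  · exfalso
    have h2 := (cell_le_term t V s).2 hb
    have : a ≤ Language.Term.realize V t ⊓ (Language.Term.realize V t)ᶜ :=
      le_inf h (hs.trans h2)
    rw [inf_compl_eq_bot, le_bot_iff] at this
    exact ha.1 this
  · rfl

lemma atom_term_false {a : A} (ha : IsAtom a) {V : γ → A} {s : γ → Bool}
    (hs : a ≤ cell V s) {t : boolLang.Term γ}
    (h : a ≤ (Language.Term.realize V t)ᶜ) : Language.Term.realize s t = false := by
  cases hb : Language.Term.realize s t
  · rfl
  · exfalso
    have h2 := (cell_le_term t V s).1 hb
    have : a ≤ Language.Term.realize V t ⊓ (Language.Term.realize V t)ᶜ :=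
      le_inf (hs.trans h2) h
    rw [inf_compl_eq_bot, le_bot_iff] at this
    exact ha.1 this

lemma realize_eq_iff [IsAtomic A] (t₁ t₂ : boolLang.Term γ) (V : γ → A) :
    Language.Term.realize V t₁ = Language.Term.realize V t₂ ↔
      ∀ s : γ → Bool,
        Language.Term.realize s t₁ ≠ Language.Term.realize s t₂ → cell V s = ⊥ := by
  constructor
  · intro h s hs
    by_contra hcell
    obtain ⟨a, ha, hac⟩ := (IsAtomic.eq_bot_or_exists_atom_le _).resolve_left hcell
    rcases atom_le_or_le_compl ha (Language.Term.realize V t₁) with h1 | h1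
    · have e1 := atom_term_true ha hac h1
      have e2 := atom_term_true ha hac (h ▸ h1)
      rw [e1, e2] at hs
      exact hs rfl
    · have e1 := atom_term_false ha hac h1
      have e2 := atom_term_false ha hac (h ▸ h1)
      rw [e1, e2] at hs
      exact hs rfl
  · intro h
    by_contra hne
    have hsd : symmDiff (Language.Term.realize V t₁) (Language.Term.realize V t₂) ≠ ⊥ :=
      fun hb => hne (symmDiff_eq_bot.mp hb)
    obtain ⟨a, ha, hale⟩ := (IsAtomic.eq_bot_or_exists_atom_le _).resolve_left hsd
    obtain ⟨s, hs⟩ := exists_cell_ge ha V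
    have hcases : (a ≤ Language.Term.realize V t₁ ∧ a ≤ (Language.Term.realize V t₂)ᶜ)
        ∨ (a ≤ Language.Term.realize V t₂ ∧ a ≤ (Language.Term.realize V t₁)ᶜ) := by
      rw [symmDiff_def] at hale
      rcases atom_le_or_le_compl ha (Language.Term.realize V t₁ \ Language.Term.realize V t₂)
        with h1 | h1
      · rw [sdiff_eq] at h1
        exact Or.inl ⟨h1.trans inf_le_left, h1.trans inf_le_right⟩
      · have h2 : a ≤ Language.Term.realize V t₂ \ Language.Term.realize V t₁ := by
          have h3 : a ≤ (Language.Term.realize V t₁ \ Language.Term.realize V t₂ ⊔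
              Language.Term.realize V t₂ \ Language.Term.realize V t₁) ⊓
              (Language.Term.realize V t₁ \ Language.Term.realize V t₂)ᶜ := le_inf hale h1
          rw [inf_sup_right, inf_compl_eq_bot, bot_sup_eq] at h3
          exact h3.trans inf_le_left
        rw [sdiff_eq] at h2
        exact Or.inr ⟨h2.trans inf_le_left, h2.trans inf_le_right⟩
    have hcb : cell V s = ⊥ := by
      rcases hcases with ⟨h1, h2⟩ | ⟨h1, h2⟩
      · exact h s (by rw [atom_term_true ha hs h1, atom_term_false ha hs h2]; simp)
      · exact h s (by rw [atom_term_true ha hs h1, atom_term_false ha hs h2]; simp)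
    rw [hcb, le_bot_iff] at hs
    exact ha.1 hs

/-- Two valuations agree up to threshold `N`. -/
def agrees (N : ℕ) (V : γ → A) (W : γ → B) : Prop :=
  ∀ s : γ → Bool, min (nsize (cell V s)) (N : ℕ∞) = min (nsize (cell W s)) (N : ℕ∞)

lemma agrees.symm {N : ℕ} {V : γ → A} {W : γ → B} (h : agrees N V W) : agrees N W V :=
  fun s => (h s).symm

lemma agrees.mono {N M : ℕ} {V : γ → A} {W : γ → B} (h : agrees N V W) (hMN : M ≤ N) :
    agrees M V W := by
  intro s
  have h1 : min (nsize (cell V s)) (M : ℕ∞)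
      = min (min (nsize (cell V s)) (N : ℕ∞)) (M : ℕ∞) := by
    rw [min_assoc, min_eq_right (Nat.cast_le.mpr hMN)]
  have h2 : min (nsize (cell W s)) (M : ℕ∞)
      = min (min (nsize (cell W s)) (N : ℕ∞)) (M : ℕ∞) := by
    rw [min_assoc, min_eq_right (Nat.cast_le.mpr hMN)]
  rw [h1, h2, h s]

lemma agrees_extend {N : ℕ} {V : γ → A} {W : γ → B} (h : agrees (N + N) V W) (x : A) :
    ∃ y : B, ∀ (s : γ → Bool) (b : Bool),
      min (nsize (cell V s ⊓ (bif b then x else xᶜ))) (N : ℕ∞)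
        = min (nsize (cell W s ⊓ (bif b then y else yᶜ))) (N : ℕ∞) := by
  classical
  have hsplit : ∀ s : γ → Bool, ∃ y, y ≤ cell W s ∧
      min (nsize (cell V s ⊓ x)) (N : ℕ∞) = min (nsize y) (N : ℕ∞)
      ∧ min (nsize (cell V s ⊓ xᶜ)) (N : ℕ∞) = min (nsize (cell W s ⊓ yᶜ)) (N : ℕ∞) := by
    intro s
    apply split_lemma N (cell V s) (cell W s) x
    have := h s
    rwa [Nat.cast_add] at this
  choose ys hy₁ hy₂ hy₃ using hsplit
  refine ⟨Finset.univ.sup ys, ?_⟩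
  have hinfy : ∀ s, cell W s ⊓ Finset.univ.sup ys = ys s := by
    intro s
    rw [Finset.sup_inf_distrib_left]
    apply le_antisymm
    · apply Finset.sup_le
      intro t _
      by_cases hts : t = s
      · subst hts; exact inf_le_right
      · have hb : cell W s ⊓ ys t ≤ (⊥ : B) := by
          calc cell W s ⊓ ys t ≤ cell W s ⊓ cell W t := inf_le_inf_left _ (hy₁ t)
            _ = ⊥ := cell_disjoint (Ne.symm hts)
        exact hb.trans bot_le
    · refine le_trans ?_ (Finset.le_sup (Finset.mem_univ s))
      exact le_inf (hy₁ s) le_rfl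
  intro s b
  cases b
  · have hWc : cell W s ⊓ (Finset.univ.sup ys)ᶜ = cell W s ⊓ (ys s)ᶜ := by
      apply le_antisymm
      · exact inf_le_inf_left _ (compl_le_compl (Finset.le_sup (Finset.mem_univ s)))
      · refine le_inf inf_le_left (le_compl_of_inf_eq_bot ?_)
        rw [inf_comm (cell W s) ((ys s)ᶜ), inf_assoc, hinfy s, compl_inf_eq_bot]
    simp only [Bool.cond_false]
    rw [hWc]
    exact hy₃ s
  · simp only [Bool.cond_true]
    rw [hinfy s]
    exact hy₂ s

end Cells

section Snoc

lemma inf_sum_succ {α : Type*} [Fintype α] {k : ℕ} (f : α ⊕ Fin (k + 1) → A) :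
    Finset.univ.inf f
      = Finset.univ.inf (f ∘ Sum.map id Fin.castSucc) ⊓ f (Sum.inr (Fin.last k)) := by
  apply le_antisymm
  · refine le_inf (Finset.le_inf fun i _ => ?_) (Finset.inf_le (Finset.mem_univ _))
    exact Finset.inf_le (Finset.mem_univ (Sum.map id Fin.castSucc i))
  · apply Finset.le_inf
    rintro (a | j) _
    · exact inf_le_left.trans (Finset.inf_le (Finset.mem_univ (Sum.inl a)))
    · rcases Fin.eq_castSucc_or_eq_last j with ⟨j', rfl⟩ | rfl
      · exact inf_le_left.trans (Finset.inf_le (Finset.mem_univ (Sum.inr j')))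
      · exact inf_le_right

lemma cell_snoc {α : Type*} [Fintype α] {k : ℕ} (v : α → A) (xs : Fin k → A) (x : A)
    (S : α ⊕ Fin (k + 1) → Bool) :
    cell (Sum.elim v (Fin.snoc xs x)) S
      = cell (Sum.elim v xs) (S ∘ Sum.map id Fin.castSucc)
        ⊓ (bif S (Sum.inr (Fin.last k)) then x else xᶜ) := by
  rw [cell, cell, inf_sum_succ]
  congr 1
  · apply Finset.inf_congr rfl
    rintro (a | j) _
    · rfl
    · simp only [Function.comp_apply, Sum.map_inr, Sum.elim_inr, Fin.snoc_castSucc]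
  · simp only [Sum.elim_inr, Fin.snoc_last]

end Snoc

section Main

variable {α : Type*} [Fintype α] [IsAtomic A] [IsAtomic B]

lemma min_one_eq_zero {a : ℕ∞} : min a 1 = 0 ↔ a = 0 := by
  constructor
  · intro h
    rcases le_total a 1 with hh | hh
    · rwa [min_eq_left hh] at h
    · rw [min_eq_right hh] at h; exact absurd h one_ne_zero
  · rintro rfl; simp

lemma agrees_bot {γ : Type*} [Fintype γ] {V : γ → A} {W : γ → B} (h : agrees 1 V W)
    (s : γ → Bool) : cell V s = ⊥ ↔ cell W s = ⊥ := by
  have h1 := h s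
  rw [Nat.cast_one] at h1
  rw [← nsize_eq_zero, ← nsize_eq_zero, ← min_one_eq_zero (a := nsize (cell V s)), h1,
    min_one_eq_zero]

lemma agrees_snoc {k N : ℕ} {v : α → A} {xs : Fin k → A} {w : α → B} {ys : Fin k → B}
    (h : agrees (N + N) (Sum.elim v xs) (Sum.elim w ys)) (x : A) :
    ∃ y : B, agrees N (Sum.elim v (Fin.snoc xs x)) (Sum.elim w (Fin.snoc ys y)) := by
  obtain ⟨y, hy⟩ := agrees_extend h x
  refine ⟨y, fun S => ?_⟩
  rw [cell_snoc, cell_snoc]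
  exact hy (S ∘ Sum.map id Fin.castSucc) (S (Sum.inr (Fin.last k)))

lemma main_lemma : ∀ {k : ℕ} (φ : boolLang.BoundedFormula α k),
    ∃ N : ℕ, ∀ (v : α → A) (xs : Fin k → A) (w : α → B) (ys : Fin k → B),
      agrees N (Sum.elim v xs) (Sum.elim w ys) →
        (φ.Realize v xs ↔ φ.Realize w ys) := by
  intro k φ
  induction φ with
  | falsum => exact ⟨0, fun _ _ _ _ _ => Iff.rfl⟩
  | equal t₁ t₂ =>
    refine ⟨1, fun v xs w ys hag => ?_⟩
    show Language.Term.realize _ t₁ = Language.Term.realize _ t₂ ↔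
      Language.Term.realize _ t₁ = Language.Term.realize _ t₂
    rw [realize_eq_iff, realize_eq_iff]
    constructor
    · intro hc s hs
      exact (agrees_bot hag s).mp (hc s hs)
    · intro hc s hs
      exact (agrees_bot hag s).mpr (hc s hs)
  | rel R ts => exact ⟨0, fun _ _ _ _ _ => Empty.elim R⟩
  | imp φ ψ ih₁ ih₂ =>
    obtain ⟨N₁, h₁⟩ := ih₁
    obtain ⟨N₂, h₂⟩ := ih₂
    refine ⟨max N₁ N₂, fun v xs w ys hag => ?_⟩
    simp only [Language.BoundedFormula.realize_imp]
    exact imp_congr (h₁ v xs w ys (hag.mono (le_max_left _ _)))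
      (h₂ v xs w ys (hag.mono (le_max_right _ _)))
  | all φ ih =>
    obtain ⟨N, hN⟩ := ih
    refine ⟨N + N, fun v xs w ys hag => ?_⟩
    simp only [Language.BoundedFormula.realize_all]
    constructor
    · intro hall y
      obtain ⟨x, hx⟩ := agrees_snoc hag.symm y
      exact (hN v _ w _ hx.symm).mp (hall x)
    · intro hall x
      obtain ⟨y, hy⟩ := agrees_snoc hag x
      exact (hN v _ w _ hy).mpr (hall y)

end Main

section MapLemmas

lemma myMapFinsetInf (F : A → B) (htop : F ⊤ = ⊤) (hinf : ∀ a b : A, F (a ⊓ b) = F a ⊓ F b)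
    {ι : Type*} (u : Finset ι) (g : ι → A) : F (u.inf g) = u.inf fun i => F (g i) := by
  classical
  induction u using Finset.induction with
  | empty => simpa using htop
  | insert _ _ h ih => rw [Finset.inf_insert, Finset.inf_insert, hinf, ih]

lemma cell_map {γ : Type*} [Fintype γ] (F : A → B) (htop : F ⊤ = ⊤)
    (hinf : ∀ a b : A, F (a ⊓ b) = F a ⊓ F b) (hcompl : ∀ a : A, F aᶜ = (F a)ᶜ)
    (V : γ → A) (s : γ → Bool) : cell (fun i => F (V i)) s = F (cell V s) := by
  rw [cell, cell, myMapFinsetInf F htop hinf]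
  apply Finset.inf_congr rfl
  intro i _
  cases hsi : s i <;> simp [hcompl]

lemma nsize_map (F : A → B) (hinj : Function.Injective F)
    (hinf : ∀ a b : A, F (a ⊓ b) = F a ⊓ F b)
    (hatom : ∀ a : A, IsAtom a → IsAtom (F a))
    (hatomSurj : ∀ b : B, IsAtom b → ∃ a : A, IsAtom a ∧ F a = b)
    (z : A) : nsize (F z) = nsize z := by
  have hmono : ∀ {a b : A}, a ≤ b → F a ≤ F b := by
    intro a b h
    exact inf_eq_left.mp (by rw [← hinf, inf_eq_left.mpr h])
  have himg : F '' {a : A | IsAtom a ∧ a ≤ z} = {b : B | IsAtom b ∧ b ≤ F z} := by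
    ext b
    constructor
    · rintro ⟨a, ⟨ha, haz⟩, rfl⟩
      exact ⟨hatom a ha, hmono haz⟩
    · rintro ⟨hb, hbz⟩
      obtain ⟨a, ha, rfl⟩ := hatomSurj b hb
      refine ⟨a, ⟨ha, ?_⟩, rfl⟩
      have h2 : F (a ⊓ z) = F a := by rw [hinf]; exact inf_eq_left.mpr hbz
      exact inf_eq_left.mp (hinj h2)
  rw [nsize, nsize, ← himg, Set.InjOn.encard_image hinj.injOn]

end MapLemmas

end Aux

/-- Let `B₁`, `B₂` be atomic Boolean algebras, each with infinitely many atoms, and let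
`F : B₁ → B₂` be a Boolean algebra embedding mapping the atoms of `B₁` bijectively onto the
atoms of `B₂` and preserving, for each `n`, the property of being a join of at most `n` atoms.
Then `F` is an elementary embedding in the first-order language of Boolean algebras. -/
theorem boolean_embedding_elementary
    (B₁ B₂ : Type*) [BooleanAlgebra B₁] [BooleanAlgebra B₂]
    [IsAtomic B₁] [IsAtomic B₂]
    (hinf₁ : Infinite {a : B₁ // IsAtom a}) (hinf₂ : Infinite {a : B₂ // IsAtom a})
    (F : B₁ → B₂)
    (hinj : Function.Injective F)
    (hbot : F ⊥ = ⊥) (htop : F ⊤ = ⊤)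
    (hsup : ∀ a b : B₁, F (a ⊔ b) = F a ⊔ F b)
    (hinf : ∀ a b : B₁, F (a ⊓ b) = F a ⊓ F b)
    (hcompl : ∀ a : B₁, F aᶜ = (F a)ᶜ)
    (hatom : ∀ a : B₁, IsAtom a → IsAtom (F a))
    (hatomSurj : ∀ b : B₂, IsAtom b → ∃ a : B₁, IsAtom a ∧ F a = b)
    (hjoin : ∀ (n : ℕ) (x : B₁),
      (∃ s : Finset B₁, s.card ≤ n ∧ (∀ a ∈ s, IsAtom a) ∧ x = s.sup id) ↔
      (∃ t : Finset B₂, t.card ≤ n ∧ (∀ b ∈ t, IsAtom b) ∧ F x = t.sup id)) :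
    ∀ (n : ℕ) (φ : boolLang.Formula (Fin n)) (v : Fin n → B₁),
      φ.Realize (F ∘ v) ↔ φ.Realize v := by
  intro n φ v
  obtain ⟨N, hN⟩ := main_lemma (A := B₁) (B := B₂) (α := Fin n) φ
  have hag : agrees N (Sum.elim v (default : Fin 0 → B₁))
      (Sum.elim (F ∘ v) (default : Fin 0 → B₂)) := by
    intro s
    have hWV : Sum.elim (F ∘ v) (default : Fin 0 → B₂)
        = fun i => F (Sum.elim v (default : Fin 0 → B₁) i) := by
      funext i
      cases i with
      | inl a => rfl
      | inr j => exact j.elim0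
    rw [hWV, cell_map F htop hinf hcompl,
      nsize_map F hinj hinf hatom hatomSurj]
  exact (hN v default (F ∘ v) default hag).symm
end

section
/- Let R = ∏_{i ∈ I} R_i be a product of connected commutative unital rings. For every first-order ring formula θ(x₀,…,xₙ) and all f₀,…,fₙ ∈ R, the idempotent ⟦θ(f̄)⟧ defined by ⟦θ(f̄)⟧(i) = 1 if R_i ⊨ θ(f₀(i),…,fₙ(i)) and 0 otherwise, satisfies: for every atom e = χ_i of the Boolean algebra of idempotents, R_e ⊨ θ(f̄_e) iff e ≤ ⟦θ(f̄)⟧; moreover ⟦θ(f̄)⟧ is the unique idempotent with this property. -/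
/-
Everything is decided coordinatewise. Multiplying by the atom `χ_i` keeps only the `i`-th
coordinate, so `χ_i ≤ g` just says `g i = 1`; and an idempotent of a product is a family of
idempotents of the connected factors, i.e. of zeros and ones, so it is determined by the set of
coordinates where it equals `1`.
-/

open FirstOrder

noncomputable local instance (S : Type*) [CommRing S] : FirstOrder.Ring.CompatibleRing S :=
  FirstOrder.Ring.compatibleRingOfRing S

theorem Pi.isIdempotentElem_iff {I : Type*} {R : I → Type*} [∀ i, Mul (R i)] {g : ∀ i, R i} :
    IsIdempotentElem g ↔ ∀ i, IsIdempotentElem (g i) :=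
  funext_iff

theorem isIdempotentElem_ite_one_zero {S : Type*} [MulZeroOneClass S] (p : Prop) [Decidable p] :
    IsIdempotentElem (if p then (1 : S) else 0) := by
  split_ifs
  exacts [.one, .zero]

theorem ite_one_zero_eq_one_iff {S : Type*} [Zero S] [One S] (h01 : (0 : S) ≠ 1) (p : Prop)
    [Decidable p] : (if p then (1 : S) else 0) = 1 ↔ p := by
  split_ifs <;> simp_all

theorem IsIdempotentElem.eq_of_eq_one_iff {S : Type*} [MulZeroOneClass S] (h01 : (0 : S) ≠ 1)
    (hS : ∀ x : S, IsIdempotentElem x → x = 0 ∨ x = 1) {x y : S} (hx : IsIdempotentElem x)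
    (hy : IsIdempotentElem y) (hxy : x = 1 ↔ y = 1) : x = y := by
  rcases hS x hx with rfl | rfl <;> rcases hS y hy with rfl | rfl <;> simp_all

theorem ite_eq_one_mul_eq_self_iff {I : Type*} [DecidableEq I] {R : I → Type*}
    [∀ i, MulZeroOneClass (R i)] (i : I) (g : ∀ i, R i) :
    (fun j => if j = i then 1 else 0 : ∀ j, R j) * g = (fun j => if j = i then 1 else 0) ↔
      g i = 1 := by
  refine ⟨fun h => by simpa using congrFun h i, fun h => funext fun j => ?_⟩
  by_cases hj : j = i
  · subst hj
    simp [h]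
  · simp [hj]

open Classical in
/-- Let `R = ∏ i, R i` be a product of connected commutative unital rings.  For every
first-order ring formula `θ(x₀,…,xₙ)` and tuple `f̄` from `R`, the idempotent `⟦θ(f̄)⟧` with
`⟦θ(f̄)⟧ i = 1` if `R i ⊨ θ(f̄(i))` and `0` otherwise satisfies: for every atom `e = χ_i` of
the Boolean algebra of idempotents (identifying `R_e ≅ R i`), `R_e ⊨ θ(f̄_e)` iff
`e ≤ ⟦θ(f̄)⟧`; moreover it is the unique idempotent with this property. -/
theorem prod_booleanValue (I : Type*) [DecidableEq I] (R : I → Type*) [∀ i, CommRing (R i)]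
    (hconn : ∀ i, (0 : R i) ≠ 1 ∧ ∀ x : R i, x * x = x → x = 0 ∨ x = 1)
    {n : ℕ} (θ : Language.ring.Formula (Fin n)) (f : Fin n → ∀ i, R i)
    (J : ∀ i, R i)
    (hJ : ∀ i, J i = if θ.Realize (fun k => f k i) then (1 : R i) else 0) :
    IsIdempotentElem J ∧
    (∀ i : I,
      (θ.Realize (fun k => f k i) ↔
        (fun j => if j = i then 1 else 0 : ∀ j, R j) * J =
          (fun j => if j = i then 1 else 0 : ∀ j, R j))) ∧
    (∀ g : ∀ i, R i, IsIdempotentElem g →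
      (∀ i : I,
        (θ.Realize (fun k => f k i) ↔
          (fun j => if j = i then 1 else 0 : ∀ j, R j) * g =
            (fun j => if j = i then 1 else 0 : ∀ j, R j))) →
      g = J) := by
  have hJ_one : ∀ i, J i = 1 ↔ θ.Realize (fun k => f k i) := fun i => by
    rw [hJ i, ite_one_zero_eq_one_iff (hconn i).1]
  have hJ_idem : IsIdempotentElem J := Pi.isIdempotentElem_iff.2 fun i => by
    rw [hJ i]
    exact isIdempotentElem_ite_one_zero _
  refine ⟨hJ_idem, fun i => by rw [ite_eq_one_mul_eq_self_iff, hJ_one], fun g hg hgθ => ?_⟩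
  funext i
  refine IsIdempotentElem.eq_of_eq_one_iff (hconn i).1 (hconn i).2
    (Pi.isIdempotentElem_iff.1 hg i) (Pi.isIdempotentElem_iff.1 hJ_idem i) ?_
  rw [hJ_one, hgθ, ite_eq_one_mul_eq_self_iff]
end
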